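/- In DI9 semantics a disjunction can never be true without one of its disjuncts being true at some moment: for every DI9 valuation α for L, all formulas B and C of L, and every real number j, if Iα(B ∨ C, j) = T then there exists a real number h such that Iα(B, h) = T or Iα(C, h) = T. -/
import Mathlib


/-- Formulas of the propositional language L: countably many atoms,
negation, and disjunction. -/
inductive Form : Type
  | atom : ℕ → Form
  | neg : Form → Form
  | disj : Form → Form → Form

/-- The three values: the truth values `T`, `F`, and the value `O`
(absence of truth value). -/
inductive Val3 : Type
  | T : Val3
  | F : Val3
  | O : Val3
  deriving DecidableEq

/-- A DI9 valuation for L: a function from (atomic formula, real number)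
to {T, F, O} satisfying persistence of truth values and weak bivalence. -/
structure DI9Val where
  val : ℕ → ℝ → Val3
  mono_T : ∀ (n : ℕ) (j h : ℝ), j < h → val n j = Val3.T → val n h = Val3.T
  mono_F : ∀ (n : ℕ) (j h : ℝ), j < h → val n j = Val3.F → val n h = Val3.F
  eventually_tv : ∀ n : ℕ, ∃ j : ℝ, val n j = Val3.T ∨ val n j = Val3.F

-- The DI9 classical interpretation α* associated to a DI9 valuation α.
open Classical in
noncomputable def cstar (α : DI9Val) : Form → Val3
  | .atom n => if ∃ j : ℝ, α.val n j = Val3.T then Val3.T else Val3.F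
  | .neg B => if cstar α B = Val3.F then Val3.T else Val3.F
  | .disj B C => if cstar α B = Val3.T ∨ cstar α C = Val3.T then Val3.T else Val3.F

/-- β is a j-extension of α: they agree on all atomic formulas at all times ≤ j. -/
def IsJExt (β α : DI9Val) (j : ℝ) : Prop :=
  ∀ (n : ℕ) (h : ℝ), h ≤ j → β.val n h = α.val n h

-- The DI9 interpretation Iα associated to a DI9 valuation α.
open Classical in
noncomputable def interp (α : DI9Val) : Form → ℝ → Val3
  | .atom n, j => α.val n j
  | .neg B, j =>
      match interp α B j with
      | Val3.T => Val3.F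
      | Val3.F => Val3.T
      | Val3.O => Val3.O
  | .disj B C, j =>
      if ∀ β : DI9Val, IsJExt β α j → (cstar β B = Val3.T ∨ cstar β C = Val3.T) then
        Val3.T
      else if ∀ β : DI9Val, IsJExt β α j → (cstar β B = Val3.F ∧ cstar β C = Val3.F) then
        Val3.F
      else Val3.O

/-- A classical interpretation for L. -/
structure ClassInterp where
  val : Form → Val3
  tv : ∀ A : Form, val A = Val3.T ∨ val A = Val3.F
  neg_iff : ∀ B : Form, val (.neg B) = Val3.T ↔ val B = Val3.F
  disj_iff : ∀ B C : Form, val (.disj B C) = Val3.T ↔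
    (val B = Val3.T ∨ val C = Val3.T)

/-- A is a tautological consequence of Γ in the sense of classical semantics. -/
def TautConseq (Γ : Set Form) (A : Form) : Prop :=
  ∀ Ic : ClassInterp, (∀ B ∈ Γ, Ic.val B = Val3.T) → Ic.val A = Val3.T

/-- A is a DI9 logical consequence of Γ. -/
def DI9Conseq (Γ : Set Form) (A : Form) : Prop :=
  ∀ (j : ℝ) (α : DI9Val), (∀ B ∈ Γ, interp α B j = Val3.T) → interp α A j = Val3.T

lemma cstar_tv (α : DI9Val) (D : Form) : cstar α D = Val3.T ∨ cstar α D = Val3.F := by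
  cases D <;> simp only [cstar] <;> split_ifs <;> simp

lemma isJExt_mono {β α : DI9Val} {j j' : ℝ} (hle : j' ≤ j) (h : IsJExt β α j) :
    IsJExt β α j' := fun n h' hh' => h n h' (le_trans hh' hle)

lemma interp_mono (α : DI9Val) (D : Form) : ∀ (h : ℝ) (β : DI9Val), IsJExt β α h →
    (interp α D h = Val3.T → cstar β D = Val3.T) ∧
    (interp α D h = Val3.F → cstar β D = Val3.F) := by
  induction D with
  | atom n =>
    intro h β hβ
    have hbh : β.val n h = α.val n h := hβ n h le_rfl
    constructor
    · intro hT
      simp only [interp] at hT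
      simp only [cstar, if_pos (⟨h, hbh.trans hT⟩ : ∃ j, β.val n j = Val3.T)]
    · intro hF
      simp only [interp] at hF
      have : ¬ ∃ j, β.val n j = Val3.T := by
        rintro ⟨k, hk⟩
        rcases lt_trichotomy k h with hlt | rfl | hgt
        · have := β.mono_T n k h hlt hk
          rw [hbh, hF] at this; exact Val3.noConfusion this
        · rw [hbh, hF] at hk; exact Val3.noConfusion hk
        · have := β.mono_F n h k hgt (hbh.trans hF)
          rw [hk] at this; exact Val3.noConfusion this
      simp only [cstar, if_neg this]
  | neg E ih =>
    intro h β hβ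
    obtain ⟨ihT, ihF⟩ := ih h β hβ
    constructor
    · intro hT
      simp only [interp] at hT
      rcases hE : interp α E h with _ | _ | _ <;> rw [hE] at hT <;>
        first
        | exact Val3.noConfusion hT
        | (simp only [cstar, if_pos (ihF hE)])
    · intro hF
      simp only [interp] at hF
      rcases hE : interp α E h with _ | _ | _ <;> rw [hE] at hF <;>
        first
        | exact Val3.noConfusion hF
        | (have hbT := ihT hE
           simp only [cstar]
           rw [if_neg]
           rw [hbT]; exact fun c => Val3.noConfusion c)
  | disj E G ihE ihG =>
    intro h β hβ
    constructor
    · intro hT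
      simp only [interp] at hT
      split_ifs at hT with hP hQ
      have := hP β hβ
      simp only [cstar, if_pos this]
    · intro hF
      simp only [interp] at hF
      split_ifs at hF with hP hQ
      obtain ⟨hE, hG⟩ := hQ β hβ
      have : ¬ (cstar β E = Val3.T ∨ cstar β G = Val3.T) := by
        rintro (hc | hc)
        · rw [hc] at hE; exact Val3.noConfusion hE
        · rw [hc] at hG; exact Val3.noConfusion hG
      simp only [cstar, if_neg this]

lemma cstar_ex (α : DI9Val) (D : Form) :
    (cstar α D = Val3.T → ∃ h, interp α D h = Val3.T) ∧
    (cstar α D = Val3.F → ∃ h, interp α D h = Val3.F) := by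
  induction D with
  | atom n =>
    constructor
    · intro hT
      simp only [cstar] at hT
      split_ifs at hT with hc
      obtain ⟨k, hk⟩ := hc
      exact ⟨k, by simpa [interp] using hk⟩
    · intro hF
      simp only [cstar] at hF
      split_ifs at hF with hc
      obtain ⟨k, hk | hk⟩ := α.eventually_tv n
      · exact absurd ⟨k, hk⟩ hc
      · exact ⟨k, by simpa [interp] using hk⟩
  | neg E ih =>
    obtain ⟨ihT, ihF⟩ := ih
    constructor
    · intro hT
      simp only [cstar] at hT
      split_ifs at hT with hc
      obtain ⟨k, hk⟩ := ihF hc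
      exact ⟨k, by simp [interp, hk]⟩
    · intro hF
      simp only [cstar] at hF
      split_ifs at hF with hc
      have hc' : cstar α E = Val3.T := (cstar_tv α E).resolve_right hc
      obtain ⟨k, hk⟩ := ihT hc'
      exact ⟨k, by simp [interp, hk]⟩
  | disj E G ihE ihG =>
    constructor
    · intro hT
      simp only [cstar] at hT
      split_ifs at hT with hc
      rcases hc with hc | hc
      · obtain ⟨k, hk⟩ := ihE.1 hc
        refine ⟨k, ?_⟩
        have hP : ∀ β : DI9Val, IsJExt β α k →
            (cstar β E = Val3.T ∨ cstar β G = Val3.T) := fun β hβ =>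
          Or.inl ((interp_mono α E k β hβ).1 hk)
        simp only [interp, if_pos hP]
      · obtain ⟨k, hk⟩ := ihG.1 hc
        refine ⟨k, ?_⟩
        have hP : ∀ β : DI9Val, IsJExt β α k →
            (cstar β E = Val3.T ∨ cstar β G = Val3.T) := fun β hβ =>
          Or.inr ((interp_mono α G k β hβ).1 hk)
        simp only [interp, if_pos hP]
    · intro hF
      simp only [cstar] at hF
      split_ifs at hF with hc
      push_neg at hc
      obtain ⟨hcE, hcG⟩ := hc
      have hE : cstar α E = Val3.F := (cstar_tv α E).resolve_left hcE
      have hG : cstar α G = Val3.F := (cstar_tv α G).resolve_left hcG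
      obtain ⟨k1, hk1⟩ := ihE.2 hE
      obtain ⟨k2, hk2⟩ := ihG.2 hG
      refine ⟨max k1 k2, ?_⟩
      have hQ : ∀ β : DI9Val, IsJExt β α (max k1 k2) →
          (cstar β E = Val3.F ∧ cstar β G = Val3.F) := fun β hβ =>
        ⟨(interp_mono α E k1 β (isJExt_mono (le_max_left _ _) hβ)).2 hk1,
         (interp_mono α G k2 β (isJExt_mono (le_max_right _ _) hβ)).2 hk2⟩
      have hP : ¬ ∀ β : DI9Val, IsJExt β α (max k1 k2) →
          (cstar β E = Val3.T ∨ cstar β G = Val3.T) := by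
        intro hP
        have hself : IsJExt α α (max k1 k2) := fun _ _ _ => rfl
        rcases hP α hself with hc | hc
        · rw [hE] at hc; exact Val3.noConfusion hc
        · rw [hG] at hc; exact Val3.noConfusion hc
      simp only [interp, if_neg hP, if_pos hQ]

theorem stmt_18 (α : DI9Val) (B C : Form) (j : ℝ)
    (h : interp α (Form.disj B C) j = Val3.T) :
    ∃ h' : ℝ, interp α B h' = Val3.T ∨ interp α C h' = Val3.T := by
  simp only [interp] at h
  split_ifs at h with hP hQ
  have hself : IsJExt α α j := fun _ _ _ => rfl
  rcases hP α hself with hc | hc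
  · obtain ⟨k, hk⟩ := (cstar_ex α B).1 hc
    exact ⟨k, Or.inl hk⟩
  · obtain ⟨k, hk⟩ := (cstar_ex α C).1 hc
    exact ⟨k, Or.inr hk⟩
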